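/- Let Z be a real r×r matrix whose smallest singular value is at least s > 0 (equivalently, ‖Z v‖ ≥ s ‖v‖ for all v ∈ ℝ^r, so Z is invertible). Let Ẑ be a real r×r matrix with ‖Z − Ẑ‖ ≤ ε₁ (operator norm), where ε₁ ≤ s/2 (so Ẑ is also invertible). Let B, B̂ be real p×r matrices with ‖B − B̂‖_F ≤ ε₂. Define G = B Z⁻¹ (so that G Z = B) and Ĝ = B̂ Ẑ⁻¹ (so that Ĝ Ẑ = B̂). Then ‖Ĝ − G‖_F² ≤ 2 (2/s)² (ε₁² ‖G‖_F² + ε₂²). -/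

import Mathlib

open scoped Matrix


/-- The Frobenius norm of a real matrix. -/
noncomputable def matFrobNorm {m n : ℕ} (A : Matrix (Fin m) (Fin n) ℝ) : ℝ :=
  Real.sqrt (∑ i, ∑ j, (A i j) ^ 2)

/-- The Euclidean operator norm of a real matrix. -/
noncomputable def matOpNorm {m n : ℕ} (A : Matrix (Fin m) (Fin n) ℝ) : ℝ :=
  ‖LinearMap.toContinuousLinearMap (Matrix.toEuclideanLin A)‖

lemma matOpNorm_nonneg {m n : ℕ} (A : Matrix (Fin m) (Fin n) ℝ) : 0 ≤ matOpNorm A :=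
  norm_nonneg _

lemma matFrobNorm_nonneg {m n : ℕ} (A : Matrix (Fin m) (Fin n) ℝ) : 0 ≤ matFrobNorm A :=
  Real.sqrt_nonneg _

lemma toEuclideanLin_le_matOpNorm {m n : ℕ} (A : Matrix (Fin m) (Fin n) ℝ)
    (x : EuclideanSpace ℝ (Fin n)) :
    ‖Matrix.toEuclideanLin A x‖ ≤ matOpNorm A * ‖x‖ :=
  (LinearMap.toContinuousLinearMap (Matrix.toEuclideanLin A)).le_opNorm x

lemma matOpNorm_le_bound {m n : ℕ} (A : Matrix (Fin m) (Fin n) ℝ) {c : ℝ} (hc : 0 ≤ c)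
    (h : ∀ x : EuclideanSpace ℝ (Fin n), ‖Matrix.toEuclideanLin A x‖ ≤ c * ‖x‖) :
    matOpNorm A ≤ c :=
  ContinuousLinearMap.opNorm_le_bound _ hc h

open scoped Matrix.Norms.L2Operator in
lemma matOpNorm_transpose {m n : ℕ} (A : Matrix (Fin m) (Fin n) ℝ) :
    matOpNorm Aᵀ = matOpNorm A := by
  have h1 : matOpNorm A = ‖A‖ := rfl
  have h2 : matOpNorm Aᵀ = ‖Aᵀ‖ := rfl
  have h3 : Aᴴ = Aᵀ := by ext i j; simp [Matrix.conjTranspose_apply]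
  rw [h1, h2, ← h3, Matrix.l2_opNorm_conjTranspose]

/-- The `i`-th row of a matrix, as a Euclidean vector. -/
noncomputable def rowE {m n : ℕ} (A : Matrix (Fin m) (Fin n) ℝ) (i : Fin m) :
    EuclideanSpace ℝ (Fin n) := (WithLp.equiv 2 _).symm (A i)

lemma sq_norm_rowE {m n : ℕ} (A : Matrix (Fin m) (Fin n) ℝ) (i : Fin m) :
    ‖rowE A i‖ ^ 2 = ∑ j, (A i j) ^ 2 := by
  rw [EuclideanSpace.norm_eq, Real.sq_sqrt (by positivity)]
  simp [rowE, sq_abs]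

lemma matFrobNorm_sq {m n : ℕ} (A : Matrix (Fin m) (Fin n) ℝ) :
    matFrobNorm A ^ 2 = ∑ i, ‖rowE A i‖ ^ 2 := by
  rw [matFrobNorm, Real.sq_sqrt (by positivity)]
  simp [sq_norm_rowE]

lemma rowE_mul {m n k : ℕ} (A : Matrix (Fin m) (Fin n) ℝ) (M : Matrix (Fin n) (Fin k) ℝ)
    (i : Fin m) : rowE (A * M) i = Matrix.toEuclideanLin Mᵀ (rowE A i) := by
  rw [rowE, Matrix.toEuclideanLin_apply]
  ext j
  simp [rowE, Matrix.mul_apply, Matrix.mulVec, dotProduct, mul_comm]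

/-- Mixed submultiplicativity: Frobenius of a product bounded by Frobenius times operator norm. -/
lemma matFrobNorm_mul_le {m n k : ℕ} (A : Matrix (Fin m) (Fin n) ℝ)
    (M : Matrix (Fin n) (Fin k) ℝ) :
    matFrobNorm (A * M) ≤ matFrobNorm A * matOpNorm M := by
  have hsq : matFrobNorm (A * M) ^ 2 ≤ (matFrobNorm A * matOpNorm M) ^ 2 := by
    rw [matFrobNorm_sq, mul_pow, matFrobNorm_sq, Finset.sum_mul]
    apply Finset.sum_le_sum
    intro i _
    rw [rowE_mul]
    have h := toEuclideanLin_le_matOpNorm Mᵀ (rowE A i)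
    rw [matOpNorm_transpose] at h
    calc ‖Matrix.toEuclideanLin Mᵀ (rowE A i)‖ ^ 2
        ≤ (matOpNorm M * ‖rowE A i‖) ^ 2 := by
          apply pow_le_pow_left₀ (norm_nonneg _) _ 2
          linarith [h]
      _ = ‖rowE A i‖ ^ 2 * matOpNorm M ^ 2 := by ring
  have h1 : 0 ≤ matFrobNorm A * matOpNorm M :=
    mul_nonneg (matFrobNorm_nonneg _) (matOpNorm_nonneg _)
  nlinarith [matFrobNorm_nonneg (A * M)]

lemma matFrobNorm_add_le {m n : ℕ} (A B : Matrix (Fin m) (Fin n) ℝ) :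
    matFrobNorm (A + B) ≤ matFrobNorm A + matFrobNorm B := by
  have key : ∀ X : Matrix (Fin m) (Fin n) ℝ,
      matFrobNorm X = ‖(WithLp.equiv 2 (Fin m → EuclideanSpace ℝ (Fin n))).symm
        (fun i => rowE X i)‖ := by
    intro X
    rw [PiLp.norm_eq_of_L2, matFrobNorm]
    congr 1
    refine Finset.sum_congr rfl fun i _ => ?_
    rw [← sq_norm_rowE]
    simp
  rw [key, key, key]
  have : (WithLp.equiv 2 (Fin m → EuclideanSpace ℝ (Fin n))).symm (fun i => rowE (A + B) i)
      = (WithLp.equiv 2 (Fin m → EuclideanSpace ℝ (Fin n))).symm (fun i => rowE A i)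
      + (WithLp.equiv 2 (Fin m → EuclideanSpace ℝ (Fin n))).symm (fun i => rowE B i) := by
    ext i j
    simp [rowE]
  rw [this]
  exact norm_add_le _ _

lemma matFrobNorm_neg_sub {m n : ℕ} (A B : Matrix (Fin m) (Fin n) ℝ) :
    matFrobNorm (A - B) = matFrobNorm (B - A) := by
  unfold matFrobNorm
  congr 1
  refine Finset.sum_congr rfl fun i _ => Finset.sum_congr rfl fun j _ => ?_
  have : (A - B) i j = -((B - A) i j) := by simp
  rw [this, neg_pow]
  ring


/-- Componentwise error bound: if `Z` has smallest singular value at least `s > 0`,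
`‖Z − Ẑ‖ ≤ ε₁ ≤ s/2`, `‖B − B̂‖_F ≤ ε₂`, `G = B Z⁻¹` and `Ĝ = B̂ Ẑ⁻¹`, then
`‖Ĝ − G‖_F² ≤ 2 (2/s)² (ε₁² ‖G‖_F² + ε₂²)`. -/
theorem component_perturbation_bound {r p : ℕ}
    (Z Zhat : Matrix (Fin r) (Fin r) ℝ) (s ε₁ ε₂ : ℝ) (hs : 0 < s)
    (hZ : ∀ v : EuclideanSpace ℝ (Fin r), s * ‖v‖ ≤ ‖Matrix.toEuclideanLin Z v‖)
    (hZhat : matOpNorm (Z - Zhat) ≤ ε₁) (hε₁ : ε₁ ≤ s / 2)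
    (B Bhat : Matrix (Fin p) (Fin r) ℝ)
    (hB : matFrobNorm (B - Bhat) ≤ ε₂)
    (G Ghat : Matrix (Fin p) (Fin r) ℝ)
    (hG : G = B * Z⁻¹) (hGhat : Ghat = Bhat * Zhat⁻¹) :
    (matFrobNorm (Ghat - G)) ^ 2 ≤
      2 * (2 / s) ^ 2 * (ε₁ ^ 2 * (matFrobNorm G) ^ 2 + ε₂ ^ 2) := by
  -- lower bound for Zhat
  have hZhatlow : ∀ v : EuclideanSpace ℝ (Fin r),
      (s / 2) * ‖v‖ ≤ ‖Matrix.toEuclideanLin Zhat v‖ := by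
    intro v
    have h1 := hZ v
    have h2 : ‖Matrix.toEuclideanLin (Z - Zhat) v‖ ≤ ε₁ * ‖v‖ :=
      le_trans (toEuclideanLin_le_matOpNorm _ v)
        (mul_le_mul_of_nonneg_right hZhat (norm_nonneg v))
    have h3 : ‖Matrix.toEuclideanLin Z v‖ ≤
        ‖Matrix.toEuclideanLin Zhat v‖ + ‖Matrix.toEuclideanLin (Z - Zhat) v‖ := by
      have : Matrix.toEuclideanLin Z v =
          Matrix.toEuclideanLin Zhat v + Matrix.toEuclideanLin (Z - Zhat) v := by
        simp [map_sub]
      rw [this]; exact norm_add_le _ _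
    nlinarith [norm_nonneg v]
  -- injectivity consequences
  have injOf : ∀ (M : Matrix (Fin r) (Fin r) ℝ) (c : ℝ), 0 < c →
      (∀ v : EuclideanSpace ℝ (Fin r), c * ‖v‖ ≤ ‖Matrix.toEuclideanLin M v‖) →
      IsUnit M.det := by
    intro M c hc h
    rw [← Matrix.isUnit_iff_isUnit_det, ← Matrix.mulVec_injective_iff_isUnit]
    intro x y hxy
    have hx : Matrix.toEuclideanLin M ((WithLp.equiv 2 _).symm x)
        = Matrix.toEuclideanLin M ((WithLp.equiv 2 _).symm y) := by
      rw [Matrix.toEuclideanLin_apply, Matrix.toEuclideanLin_apply]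
      simp [hxy]
    have := h ((WithLp.equiv 2 _).symm x - (WithLp.equiv 2 _).symm y)
    rw [map_sub, hx, sub_self, norm_zero] at this
    have h0 : ‖(WithLp.equiv 2 (Fin r → ℝ)).symm x - (WithLp.equiv 2 (Fin r → ℝ)).symm y‖ = 0 := by
      nlinarith [norm_nonneg ((WithLp.equiv 2 (Fin r → ℝ)).symm x - (WithLp.equiv 2 (Fin r → ℝ)).symm y)]
    have := norm_eq_zero.mp h0
    have := sub_eq_zero.mp this
    exact (WithLp.equiv 2 (Fin r → ℝ)).symm.injective this
  have hZdet : IsUnit Z.det := injOf Z s hs hZ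
  have hZhatdet : IsUnit Zhat.det := injOf Zhat (s / 2) (by linarith) hZhatlow
  -- operator norm bound on Zhat⁻¹
  have hinv : matOpNorm Zhat⁻¹ ≤ 2 / s := by
    apply matOpNorm_le_bound _ (by positivity)
    intro x
    have key : Matrix.toEuclideanLin Zhat (Matrix.toEuclideanLin Zhat⁻¹ x) = x := by
      have : Zhat *ᵥ (Zhat⁻¹ *ᵥ (WithLp.equiv 2 _) x) = (WithLp.equiv 2 _) x := by
        rw [Matrix.mulVec_mulVec, Matrix.mul_nonsing_inv _ hZhatdet, Matrix.one_mulVec]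
      rw [Matrix.toEuclideanLin_apply, Matrix.toEuclideanLin_apply]
      simp only [Equiv.apply_symm_apply]
      rw [Matrix.mulVec_mulVec, Matrix.mul_nonsing_inv _ hZhatdet, Matrix.one_mulVec]
    have := hZhatlow (Matrix.toEuclideanLin Zhat⁻¹ x)
    rw [key] at this
    rw [div_mul_eq_mul_div, le_div_iff₀ hs]
    nlinarith
  -- the key algebraic identity
  have hid : Ghat - G = ((Bhat - B) + G * (Z - Zhat)) * Zhat⁻¹ := by
    have hGZ : G * Z = B := by
      rw [hG, Matrix.nonsing_inv_mul_cancel_right _ _ hZdet]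
    have hGZh : G = G * Zhat * Zhat⁻¹ := by
      rw [Matrix.mul_nonsing_inv_cancel_right _ _ hZhatdet]
    rw [hGhat]
    rw [sub_eq_iff_eq_add]
    calc Bhat * Zhat⁻¹ = (Bhat - G * Zhat) * Zhat⁻¹ + G * Zhat * Zhat⁻¹ := by
          rw [Matrix.sub_mul]; abel
      _ = ((Bhat - B) + G * (Z - Zhat)) * Zhat⁻¹ + G := by
          rw [← hGZh]
          congr 2
          rw [Matrix.mul_sub, ← hGZ]
          abel
  -- norm estimates
  set F := @matFrobNorm p r
  have h1 : F (Ghat - G) ≤ ((F (Bhat - B)) + F (G * (Z - Zhat))) * matOpNorm Zhat⁻¹ := by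
    rw [hid]
    calc F (((Bhat - B) + G * (Z - Zhat)) * Zhat⁻¹)
        ≤ F ((Bhat - B) + G * (Z - Zhat)) * matOpNorm Zhat⁻¹ := matFrobNorm_mul_le _ _
      _ ≤ _ := by
          apply mul_le_mul_of_nonneg_right (matFrobNorm_add_le _ _) (matOpNorm_nonneg _)
  have h2 : F (Bhat - B) ≤ ε₂ := by rw [show F (Bhat - B) = matFrobNorm (B - Bhat) from matFrobNorm_neg_sub _ _]; exact hB
  have h3 : F (G * (Z - Zhat)) ≤ F G * ε₁ :=
    le_trans (matFrobNorm_mul_le _ _)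
      (mul_le_mul_of_nonneg_left hZhat (matFrobNorm_nonneg _))
  have hε₁0 : 0 ≤ ε₁ := le_trans (matOpNorm_nonneg _) hZhat
  have hε₂0 : 0 ≤ ε₂ := le_trans (matFrobNorm_nonneg _) hB
  have hchain : F (Ghat - G) ≤ (ε₂ + F G * ε₁) * (2 / s) := by
    calc F (Ghat - G) ≤ ((F (Bhat - B)) + F (G * (Z - Zhat))) * matOpNorm Zhat⁻¹ := h1
      _ ≤ (ε₂ + F G * ε₁) * (2 / s) := by
          apply mul_le_mul (by linarith) hinv (matOpNorm_nonneg _)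
          have := matFrobNorm_nonneg G
          nlinarith
  have hFnn := matFrobNorm_nonneg (Ghat - G)
  have hFG := matFrobNorm_nonneg G
  have hrhs : 0 ≤ (ε₂ + F G * ε₁) * (2 / s) := by positivity
  have hsq : F (Ghat - G) ^ 2 ≤ ((ε₂ + F G * ε₁) * (2 / s)) ^ 2 :=
    pow_le_pow_left₀ hFnn hchain 2
  have h2s : (0:ℝ) < 2 / s := by positivity
  nlinarith [sq_nonneg (ε₂ - F G * ε₁), sq_nonneg (2 / s), mul_pos h2s h2s]
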